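/- arXiv:math/0702097 — 5 statements merged into one kernel-verified Lean document; each statement's English description precedes it below -/
import Mathlib

section
/- The unique formal power series q(x) over the rationals satisfying q(x) = 1 + x·q(x)^3 has coefficients given by the Fuss–Catalan numbers: the coefficient of x^n in q(x) equals (3n)!/(n!·(2n+1)!). -/
/-!
Since `1 - 3 X q²` has constant coefficient `1`, it is a unit, so differentiating `q = 1 + X q³`
twice expresses `q'` and `q''` through `q`; eliminating them gives the linear differential equation
`(4X - 27X²) q'' + (6 - 54X) q' = 6q`. Comparing coefficients yields the recurrence
`2(n+1)(2n+3) a_{n+1} = 3(3n+1)(3n+2) a_n`, which together with `a_0 = 1` pins down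
the Fuss–Catalan numbers.
-/

open PowerSeries

theorem PowerSeries.coeff_X_mul_derivative {R : Type*} [CommRing R] (f : R⟦X⟧) (n : ℕ) :
    coeff n (X * d⁄dX R f) = n * coeff n f := by
  cases n with
  | zero => simp
  | succ n => rw [coeff_succ_X_mul, coeff_derivative, mul_comm]; push_cast; rfl

namespace FussCatalan

variable {R : Type*} [CommRing R] {q : R⟦X⟧}

theorem constantCoeff_eq_one (hq : q = 1 + X * q ^ 3) : constantCoeff q = 1 := by
  rw [hq]; simp

theorem mul_derivative (hq : q = 1 + X * q ^ 3) :
    (1 - 3 * X * q ^ 2) * d⁄dX R q = q ^ 3 := by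
  have h := congrArg (d⁄dX R) hq
  simp only [map_add, derivative_one, Derivation.leibniz, derivative_pow, derivative_X,
    smul_eq_mul] at h
  norm_num at h
  linear_combination h

theorem mul_derivative_derivative (hq : q = 1 + X * q ^ 3) :
    (1 - 3 * X * q ^ 2) * d⁄dX R (d⁄dX R q) =
      6 * q ^ 2 * d⁄dX R q + 6 * X * q * (d⁄dX R q) ^ 2 := by
  have h := congrArg (d⁄dX R) (mul_derivative hq)
  have h3 : d⁄dX R (3 : R⟦X⟧) = 0 := (d⁄dX R).map_natCast 3
  simp only [map_sub, derivative_one, Derivation.leibniz, derivative_pow, derivative_X, h3,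
    smul_eq_mul] at h
  norm_num at h
  linear_combination h

theorem differential_equation (hq : q = 1 + X * q ^ 3) :
    (4 * X - 27 * X ^ 2) * d⁄dX R (d⁄dX R q) + (6 - 54 * X) * d⁄dX R q = 6 * q := by
  have hu : IsUnit (1 - 3 * X * q ^ 2 : R⟦X⟧) := by simp [isUnit_iff_constantCoeff]
  refine (hu.pow 3).mul_left_cancel ?_
  have hp := mul_derivative hq
  linear_combination (6 * q + 6 * q ^ 2 - 6 * X * q ^ 4) * hq +
    ((4 * X - 27 * X ^ 2) * (6 * q ^ 2 * (1 - 3 * X * q ^ 2) +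
      6 * X * q * ((1 - 3 * X * q ^ 2) * d⁄dX R q + q ^ 3)) +
      (6 - 54 * X) * (1 - 3 * X * q ^ 2) ^ 2) * hp +
    ((4 * X - 27 * X ^ 2) * (1 - 3 * X * q ^ 2) ^ 2) * mul_derivative_derivative hq

theorem coeff_succ (hq : q = 1 + X * q ^ 3) (n : ℕ) :
    2 * (n + 1) * (2 * n + 3) * coeff (n + 1) q = 3 * (3 * n + 1) * (3 * n + 2) * coeff n q := by
  have euler : X ^ 2 * d⁄dX R (d⁄dX R q) = X * d⁄dX R (X * d⁄dX R q) - X * d⁄dX R q := by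
    simp only [Derivation.leibniz, derivative_X, smul_eq_mul]
    ring
  have ode : 4 • (X * d⁄dX R (d⁄dX R q)) + 6 • d⁄dX R q =
      27 • (X * d⁄dX R (X * d⁄dX R q)) + 27 • (X * d⁄dX R q) + 6 • q := by
    simp only [nsmul_eq_mul]
    push_cast
    linear_combination differential_equation hq + 27 * euler
  have h := congrArg (coeff n) ode
  simp only [map_add, map_nsmul, coeff_X_mul_derivative, coeff_derivative] at h
  simp only [nsmul_eq_mul] at h
  push_cast at h
  linear_combination h

end FussCatalan

open Nat in
def fussCatalan (n : ℕ) : ℚ := (3 * n)! / (n ! * (2 * n + 1)!)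

theorem fussCatalan_succ (n : ℕ) :
    2 * (n + 1) * (2 * n + 3) * fussCatalan (n + 1) =
      3 * (3 * n + 1) * (3 * n + 2) * fussCatalan n := by
  simp only [fussCatalan, show 3 * (n + 1) = 3 * n + 2 + 1 by ring,
    show 2 * (n + 1) + 1 = 2 * n + 1 + 1 + 1 by ring, Nat.factorial_succ]
  push_cast
  field_simp
  ring

/-- The unique formal power series `q` over `ℚ` satisfying `q = 1 + X * q^3`
has coefficients given by the Fuss–Catalan numbers:
the coefficient of `X^n` is `(3n)! / (n! * (2n+1)!)`. -/
theorem stmt_0 (q : PowerSeries ℚ) (hq : q = 1 + PowerSeries.X * q ^ 3) :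
    ∀ n : ℕ, PowerSeries.coeff n q =
      (Nat.factorial (3 * n) : ℚ) /
        ((Nat.factorial n : ℚ) * (Nat.factorial (2 * n + 1) : ℚ)) := by
  suffices ∀ n, coeff n q = fussCatalan n from this
  intro n
  induction n with
  | zero => simp [fussCatalan, FussCatalan.constantCoeff_eq_one hq]
  | succ n ih =>
    refine mul_left_cancel₀ (by positivity : (2 * (n + 1) * (2 * n + 3) : ℚ) ≠ 0) ?_
    rw [FussCatalan.coeff_succ hq, fussCatalan_succ, ih]
end

section
/- There exists exactly one formal power series q in ℚ[[x]] with constant term 1 satisfying q = 1 + x·q^3. -/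
/-!
If `p` and `q` both solve `q = 1 + X q^k`, then `(p - q) (1 - X ∑ pⁱ q^(k-1-i)) = 0`, and the
second factor has constant coefficient `1`, so it is a unit and `p = q`. For existence, the
reciprocal `u = q⁻¹` must be a root of the monic polynomial `T^k - T^(k-1) + X`, which modulo `X`
has the simple root `1`; since `R⟦X⟧` is `X`-adically complete, Hensel's lemma lifts it.
-/

namespace PowerSeries

variable {R : Type*} [CommRing R]

theorem eq_of_eq_one_add_X_mul_pow {k : ℕ} {p q : R⟦X⟧} (hp : p = 1 + X * p ^ k)
    (hq : q = 1 + X * q ^ k) : p = q := by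
  set s := ∑ i ∈ Finset.range k, p ^ i * q ^ (k - 1 - i)
  have hunit : IsUnit (1 - X * s) := by
    simp [isUnit_iff_constantCoeff]
  have hprod : (1 - X * s) * (p - q) = 0 := by
    linear_combination hp - hq - X * geom_sum₂_mul p q k
  exact sub_eq_zero.mp (hunit.mul_right_eq_zero.mp hprod)

theorem exists_eq_one_add_X_mul_pow {k : ℕ} (hk : k ≠ 0) : ∃ q : R⟦X⟧, q = 1 + X * q ^ k := by
  obtain ⟨m, rfl⟩ := Nat.exists_eq_add_one_of_ne_zero hk
  let f : Polynomial R⟦X⟧ := Polynomial.X ^ (m + 1) - Polynomial.X ^ m + Polynomial.C X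
  have hf : f.Monic := by
    unfold f
    monicity!
  obtain ⟨u, hu, hu_sub⟩ := HenselianRing.is_henselian (I := Ideal.span {X}) f hf 1
    (by simp [f]) (by simp [f, Polynomial.derivative_X_pow])
  have hu_unit : IsUnit u := by
    rw [Ideal.mem_span_singleton, X_dvd_iff, map_sub, map_one, sub_eq_zero] at hu_sub
    simp [isUnit_iff_constantCoeff, hu_sub]
  obtain ⟨v, rfl⟩ := hu_unit
  refine ⟨↑v⁻¹, ?_⟩
  have hroot : (v : R⟦X⟧) ^ (m + 1) - (v : R⟦X⟧) ^ m + X = 0 := by simpa [f] using hu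
  have hpow : ((↑v⁻¹ : R⟦X⟧) * v) ^ m = 1 := by simp
  linear_combination (-(↑v⁻¹ : R⟦X⟧) ^ (m + 1)) * hroot + ↑v⁻¹ * (↑v - 1) * hpow
    + Units.inv_mul v

end PowerSeries

/-- There is exactly one formal power series `q ∈ ℚ[[x]]` with constant term `1`
satisfying `q = 1 + x·q^3`. -/
theorem stmt_1 :
    ∃! q : PowerSeries ℚ,
      PowerSeries.constantCoeff q = 1 ∧ q = 1 + PowerSeries.X * q ^ 3 := by
  obtain ⟨q, hq⟩ := PowerSeries.exists_eq_one_add_X_mul_pow (R := ℚ) three_ne_zero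
  refine ⟨q, ⟨?_, hq⟩, fun p hp => PowerSeries.eq_of_eq_one_add_X_mul_pow hp.2 hq⟩
  rw [hq]
  simp
end

section
/- For every n ≥ 1, the number (3n)!/(n!·n!·(n+1)!) is a (positive) integer. -/
/-! The quotient is `C(3n, n) · Catalan(n)`: splitting `(3n)! = C(3n, n) · n! · (2n)!` and
`(2n)! = C(2n, n) · n! · n!` with `C(2n, n) = (n + 1) · Catalan(n)` exhibits the extra factor
`n + 1` that turns one `n!` into `(n + 1)!`. -/

open Nat

theorem factorial_mul_succ_factorial_mul_catalan (n : ℕ) :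
    n ! * (n + 1)! * catalan n = (2 * n)! := by
  have h := add_choose_mul_factorial_mul_factorial n n
  rw [← two_mul, ← centralBinom_eq_two_mul_choose, ← succ_mul_catalan_eq_centralBinom] at h
  rw [← h, factorial_succ]
  ring

theorem factorial_mul_factorial_mul_succ_factorial_mul_choose_mul_catalan (n : ℕ) :
    n ! * n ! * (n + 1)! * ((3 * n).choose n * catalan n) = (3 * n)! := by
  have h := add_choose_mul_factorial_mul_factorial (2 * n) n
  rw [show 2 * n + n = 3 * n by ring, ← factorial_mul_succ_factorial_mul_catalan] at h
  rw [← h]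
  ring

open Nat in
theorem stmt_3_general (n : ℕ) :
    (n ! * n ! * (n + 1)!) ∣ (3 * n)! ∧ 0 < (3 * n)! / (n ! * n ! * (n + 1)!) := by
  have hdvd : n ! * n ! * (n + 1)! ∣ (3 * n)! :=
    Dvd.intro _ (factorial_mul_factorial_mul_succ_factorial_mul_choose_mul_catalan n)
  exact ⟨hdvd, Nat.div_pos (Nat.le_of_dvd (factorial_pos _) hdvd) (by positivity)⟩

open Nat in
/-- For every `n ≥ 1`, the number `(3n)!/(n!·n!·(n+1)!)` is a positive integer:
`n!·n!·(n+1)!` divides `(3n)!`, and the (exact) natural quotient is positive. -/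
theorem stmt_3 (n : ℕ) (hn : 1 ≤ n) :
    (n ! * n ! * (n + 1)!) ∣ (3 * n)! ∧ 0 < (3 * n)! / (n ! * n ! * (n + 1)!) :=
  stmt_3_general n
end

section
/- The function u ↦ F(u) + u·F'(u), where F(u) = ∑_{n≥1} (3n)!/(n!·n!·(n+1)!)·u^n, is strictly increasing on [0, 1/27), equals 0 at u = 0, and tends to +∞ as u → 1/27⁻; consequently for every y > 0 there is a unique u* ∈ (0, 1/27) with y = F(u*) + u*·F'(u*). -/
/-
`F(u) + u F'(u) = (u F(u))' = ∑ (n+1) cₙ uⁿ` has nonnegative coefficients, so it is continuous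
and strictly increasing on `[0, 1/27)` and vanishes at `0`. The ratio
`c_{n+1} / cₙ = 3(3n+1)(3n+2) / ((n+1)(n+2))` gives `27ⁿ / (9n²) ≤ cₙ ≤ 27ⁿ / (n+1)` for
`n ≥ 1`: the upper bound makes the series converge below `1/27`, and by the lower bound its terms
at `1/27` dominate the harmonic series `1/(9n)`, so it tends to `+∞` there. Existence and
uniqueness of `u*` then follow from the intermediate value theorem and strict monotonicity.
-/

open Nat

/-- The coefficients `(3n)!/(n!·n!·(n+1)!)` (for `n ≥ 1`, and `0` for `n = 0`). -/
noncomputable def fcCoeff (n : ℕ) : ℝ :=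
  if n = 0 then 0 else ((3 * n)! : ℝ) / ((n ! : ℝ) * (n !) * ((n + 1)!))

/-- The series `F(u) = ∑_{n≥1} (3n)!/(n!·n!·(n+1)!) u^n`. -/
noncomputable def Fser (u : ℝ) : ℝ := ∑' n : ℕ, fcCoeff n * u ^ n

open Filter Set Topology

section PowerSeries

variable {c : ℕ → ℝ} {C R : ℝ}

theorem summable_natCast_pow_mul_mul_pow (hc : ∀ n, |c n| * R ^ n ≤ C) (k : ℕ) {x : ℝ}
    (hx : |x| < R) : Summable fun n : ℕ => (n : ℝ) ^ k * c n * x ^ n := by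
  have hR : 0 < R := (abs_nonneg x).trans_lt hx
  have hq : ‖|x| / R‖ < 1 := by
    rwa [Real.norm_eq_abs, abs_div, abs_abs, abs_of_pos hR, div_lt_one hR]
  refine ((summable_pow_mul_geometric_of_norm_lt_one k hq).mul_left C).of_norm_bounded
    fun n => ?_
  calc ‖(n : ℝ) ^ k * c n * x ^ n‖ = (n : ℝ) ^ k * (|c n| * R ^ n) * (|x| / R) ^ n := by
        simp only [div_pow, norm_mul, norm_pow, Real.norm_eq_abs, Nat.abs_cast]
        field_simp
    _ ≤ (n : ℝ) ^ k * C * (|x| / R) ^ n := by gcongr; exact hc n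
    _ = C * ((n : ℝ) ^ k * (|x| / R) ^ n) := by ring

theorem hasDerivAt_tsum_mul_pow (hc : ∀ n, |c n| * R ^ n ≤ C) {x : ℝ} (hx : |x| < R) :
    HasDerivAt (fun u => ∑' n, c n * u ^ n) (∑' n : ℕ, c n * (n * x ^ (n - 1))) x := by
  obtain ⟨r, hxr, hrR⟩ := exists_between hx
  have hr : 0 < r := (abs_nonneg x).trans_lt hxr
  have hbound : Summable fun n => |c n| * (n * r ^ (n - 1)) := by
    have habs : ∀ n, |(|c n|)| * R ^ n ≤ C := by simpa using hc
    refine ((summable_natCast_pow_mul_mul_pow habs 1 (by rwa [abs_of_pos hr])).div_const r).congr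
      fun n => ?_
    rcases n with _ | n
    · simp
    · simp only [Nat.add_sub_cancel, pow_succ]
      field_simp
  refine hasDerivAt_tsum_of_isPreconnected hbound isOpen_Ioo isPreconnected_Ioo
    (fun n y _ => (hasDerivAt_pow n y).const_mul (c n)) (fun n y hy => ?_)
    (abs_lt.1 hxr) (by simpa using summable_natCast_pow_mul_mul_pow hc 0 hx) (abs_lt.1 hxr)
  have hy : |y| ≤ r := abs_le.2 ⟨hy.1.le, hy.2.le⟩
  simp only [norm_mul, norm_pow, Real.norm_eq_abs, Nat.abs_cast]
  gcongr

theorem tsum_mul_pow_add_mul_deriv (hc : ∀ n, |c n| * R ^ n ≤ C) {x : ℝ} (hx : |x| < R) :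
    (∑' n, c n * x ^ n) + x * deriv (fun u => ∑' n, c n * u ^ n) x
      = ∑' n : ℕ, ((n : ℝ) + 1) * c n * x ^ n := by
  have hderiv :
      x * ∑' n : ℕ, c n * (n * x ^ (n - 1)) = ∑' n : ℕ, (n : ℝ) ^ 1 * c n * x ^ n := by
    rw [← tsum_mul_left]
    congr 1 with n
    rcases n with _ | n
    · simp
    · simp only [Nat.add_sub_cancel, pow_succ]
      ring
  have hsum : Summable fun n : ℕ => c n * x ^ n := by
    simpa using summable_natCast_pow_mul_mul_pow hc 0 hx
  rw [(hasDerivAt_tsum_mul_pow hc hx).deriv, hderiv,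
    ← hsum.tsum_add (summable_natCast_pow_mul_mul_pow hc 1 hx)]
  congr 1 with n
  ring

theorem strictMonoOn_tsum_mul_pow (hc : ∀ n, 0 ≤ c n) {m : ℕ} (hm : m ≠ 0) (hcm : 0 < c m)
    (hsum : ∀ x ∈ Ico 0 R, Summable fun n => c n * x ^ n) :
    StrictMonoOn (fun x => ∑' n, c n * x ^ n) (Ico 0 R) := by
  intro u hu v hv huv
  refine Summable.tsum_lt_tsum_of_nonneg (i := m) (fun n => ?_) (fun n => ?_) ?_ (hsum v hv)
  · have := hc n
    have := hu.1
    positivity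
  · exact mul_le_mul_of_nonneg_left (pow_le_pow_left₀ hu.1 huv.le n) (hc n)
  · exact mul_lt_mul_of_pos_left (pow_lt_pow_left₀ huv hu.1 hm) hcm

theorem tendsto_tsum_mul_pow_atTop (hc : ∀ n, 0 ≤ c n) (hR : 0 < R)
    (hsum : ∀ x ∈ Ico 0 R, Summable fun n => c n * x ^ n)
    (hdiv : ¬Summable fun n => c n * R ^ n) :
    Tendsto (fun x => ∑' n, c n * x ^ n) (𝓝[<] R) atTop := by
  have hpartial := (not_summable_iff_tendsto_nat_atTop_of_nonneg
    fun n => mul_nonneg (hc n) (pow_nonneg hR.le n)).1 hdiv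
  refine tendsto_atTop.2 fun M => ?_
  obtain ⟨N, hN⟩ := (hpartial.eventually_gt_atTop M).exists
  have hnear : ∀ᶠ x in 𝓝[<] R, M < ∑ n ∈ Finset.range N, c n * x ^ n :=
    nhdsWithin_le_nhds <| (continuous_finsetSum _ fun n _ => by fun_prop).continuousAt.eventually
      (lt_mem_nhds hN)
  filter_upwards [hnear, Ioo_mem_nhdsLT hR] with x hMx hx
  exact hMx.le.trans <| (hsum x (Ioo_subset_Ico_self hx)).sum_le_tsum _ fun n _ =>
    mul_nonneg (hc n) (pow_nonneg hx.1.le n)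

end PowerSeries

theorem existsUnique_eq_of_strictMonoOn_of_tendsto_atTop {f : ℝ → ℝ} {a b y : ℝ} (hab : a < b)
    (hf : ContinuousOn f (Ico a b)) (hmono : StrictMonoOn f (Ico a b))
    (htop : Tendsto f (𝓝[<] b) atTop) (hy : f a < y) :
    ∃! u, u ∈ Ioo a b ∧ y = f u := by
  obtain ⟨b', hyb', hb'⟩ := ((htop.eventually_ge_atTop y).and (Ioo_mem_nhdsLT hab)).exists
  have hsub : Icc a b' ⊆ Ico a b := Icc_subset_Ico_right hb'.2
  obtain ⟨u, hu, rfl⟩ := intermediate_value_Icc hb'.1.le (hf.mono hsub) ⟨hy.le, hyb'⟩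
  have hua : u ≠ a := by rintro rfl; exact hy.false
  refine ⟨u, ⟨⟨lt_of_le_of_ne hu.1 hua.symm, hu.2.trans_lt hb'.2⟩, rfl⟩, ?_⟩
  rintro v ⟨hv, hfv⟩
  exact hmono.injOn (Ioo_subset_Ico_self hv) (hsub hu) hfv.symm

theorem fcCoeff_nonneg (n : ℕ) : 0 ≤ fcCoeff n := by
  unfold fcCoeff
  split <;> positivity

theorem fcCoeff_one : fcCoeff 1 = 3 := by
  norm_num [fcCoeff, factorial]

theorem fcCoeff_succ_mul {n : ℕ} (hn : n ≠ 0) :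
    fcCoeff (n + 1) * ((n + 1) * (n + 2)) = 3 * (3 * n + 1) * (3 * n + 2) * fcCoeff n := by
  have h3n : 3 * (n + 1) = 3 * n + 2 + 1 := by ring
  simp only [fcCoeff, if_neg hn, if_neg n.succ_ne_zero, h3n, factorial_succ]
  push_cast
  field_simp
  ring

theorem succ_mul_fcCoeff_le (n : ℕ) : (n + 1) * fcCoeff n ≤ 27 ^ n := by
  rcases n.eq_zero_or_pos with rfl | hn
  · simp [fcCoeff]
  induction n, hn using Nat.le_induction with
  | base => norm_num [fcCoeff_one]
  | succ n hn ih =>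
    have hrec := fcCoeff_succ_mul (n := n) (by omega)
    have hc := fcCoeff_nonneg n
    have key : (n + 2) * fcCoeff (n + 1) * (n + 1) ≤ 27 ^ (n + 1) * (n + 1) :=
      calc (n + 2) * fcCoeff (n + 1) * (n + 1) = 3 * (3 * n + 1) * (3 * n + 2) * fcCoeff n := by
            linear_combination hrec
        _ ≤ 27 * (n + 1) * ((n + 1) * fcCoeff n) := by nlinarith
        _ ≤ 27 * (n + 1) * 27 ^ n := by gcongr
        _ = 27 ^ (n + 1) * (n + 1) := by ring
    push_cast
    linarith [le_of_mul_le_mul_right key (by positivity)]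

theorem pow_le_nine_mul_sq_mul_fcCoeff {n : ℕ} (hn : 1 ≤ n) : 27 ^ n ≤ 9 * n ^ 2 * fcCoeff n := by
  induction n, hn using Nat.le_induction with
  | base => norm_num [fcCoeff_one]
  | succ n hn ih =>
    have hrec := fcCoeff_succ_mul (n := n) (by omega)
    have hc := fcCoeff_nonneg n
    have key : (27 : ℝ) ^ (n + 1) * ((n + 1) * (n + 2))
        ≤ 9 * (n + 1) ^ 2 * fcCoeff (n + 1) * ((n + 1) * (n + 2)) :=
      calc (27 : ℝ) ^ (n + 1) * ((n + 1) * (n + 2)) = 27 * (n + 1) * (n + 2) * 27 ^ n := by ring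
        _ ≤ 27 * (n + 1) * (n + 2) * (9 * n ^ 2 * fcCoeff n) := by gcongr
        _ = 27 * (n + 1) * fcCoeff n * (9 * n ^ 2 * (n + 2)) := by ring
        _ ≤ 27 * (n + 1) * fcCoeff n * ((n + 1) * (3 * n + 1) * (3 * n + 2)) := by
          refine mul_le_mul_of_nonneg_left ?_ (by positivity)
          nlinarith [n.cast_nonneg (α := ℝ)]
        _ = 9 * (n + 1) ^ 2 * fcCoeff (n + 1) * ((n + 1) * (n + 2)) := by
          linear_combination (-9 * ((n : ℝ) + 1) ^ 2) * hrec
    push_cast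
    exact le_of_mul_le_mul_right key (by positivity)

theorem not_summable_succ_mul_fcCoeff_mul_pow :
    ¬Summable fun n : ℕ => ((n : ℝ) + 1) * fcCoeff n * (1 / 27) ^ n := by
  intro hsum
  refine Real.not_summable_natCast_inv <|
    (hsum.mul_left 9).of_nonneg_of_le (fun n => by positivity) fun n => ?_
  rcases n.eq_zero_or_pos with rfl | hn
  · simp [fcCoeff]
  have hlow := pow_le_nine_mul_sq_mul_fcCoeff hn
  have hc := fcCoeff_nonneg n
  have hn' : (0 : ℝ) < n := by exact_mod_cast hn
  rw [one_div, inv_pow, inv_le_iff_one_le_mul₀ hn']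
  calc (1 : ℝ) ≤ 9 * n ^ 2 * fcCoeff n * (27 ^ n)⁻¹ := by
        rw [le_mul_inv_iff₀ (by positivity), one_mul]; exact hlow
    _ ≤ 9 * ((n + 1) * fcCoeff n * (27 ^ n)⁻¹) * n := by
        have : (0 : ℝ) ≤ (27 ^ n)⁻¹ := by positivity
        nlinarith [mul_nonneg (mul_nonneg hn'.le hc) this]

theorem abs_succ_mul_fcCoeff_mul_pow_le (n : ℕ) :
    |((n : ℝ) + 1) * fcCoeff n| * (1 / 27) ^ n ≤ 1 := by
  rw [abs_of_nonneg (by have := fcCoeff_nonneg n; positivity), one_div, inv_pow,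
    mul_inv_le_iff₀ (by positivity), one_mul]
  exact succ_mul_fcCoeff_le n

theorem abs_fcCoeff_mul_pow_le (n : ℕ) : |fcCoeff n| * (1 / 27) ^ n ≤ 1 := by
  rw [abs_of_nonneg (fcCoeff_nonneg n), one_div, inv_pow, mul_inv_le_iff₀ (by positivity),
    one_mul]
  exact (le_mul_of_one_le_left (fcCoeff_nonneg n) (by simp)).trans (succ_mul_fcCoeff_le n)

theorem Fser_zero : Fser 0 = 0 := by
  have hterm : ∀ n, fcCoeff n * (0 : ℝ) ^ n = 0 := by rintro (_ | n) <;> simp [fcCoeff]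
  simp [Fser, hterm]

/-- The function `u ↦ F(u) + u·F'(u)` is strictly increasing on `[0, 1/27)`,
equals `0` at `u = 0`, tends to `+∞` as `u → (1/27)⁻`, and consequently for every
`y > 0` there is a unique `u* ∈ (0, 1/27)` with `y = F(u*) + u*·F'(u*)`. -/
theorem stmt_5 :
    StrictMonoOn (fun u : ℝ => Fser u + u * deriv Fser u) (Set.Ico 0 (1 / 27)) ∧
    Fser 0 + (0 : ℝ) * deriv Fser 0 = 0 ∧
    Filter.Tendsto (fun u : ℝ => Fser u + u * deriv Fser u)
      (nhdsWithin (1 / 27) (Set.Iio (1 / 27))) Filter.atTop ∧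
    ∀ y : ℝ, 0 < y →
      ∃! u : ℝ, u ∈ Set.Ioo (0 : ℝ) (1 / 27) ∧ y = Fser u + u * deriv Fser u := by
  have habs : ∀ u ∈ Ico (0 : ℝ) (1 / 27), |u| < 1 / 27 := fun u hu =>
    (abs_of_nonneg hu.1).trans_lt hu.2
  have hnonneg : ∀ n : ℕ, 0 ≤ ((n : ℝ) + 1) * fcCoeff n := fun n => by
    have := fcCoeff_nonneg n
    positivity
  have hsum : ∀ u ∈ Ico (0 : ℝ) (1 / 27),
      Summable fun n : ℕ => ((n : ℝ) + 1) * fcCoeff n * u ^ n := fun u hu => by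
    simpa using summable_natCast_pow_mul_mul_pow abs_succ_mul_fcCoeff_mul_pow_le 0 (habs u hu)
  have heq : EqOn (fun u => ∑' n : ℕ, ((n : ℝ) + 1) * fcCoeff n * u ^ n)
      (fun u => Fser u + u * deriv Fser u) (Ico 0 (1 / 27)) := fun u hu =>
    (tsum_mul_pow_add_mul_deriv abs_fcCoeff_mul_pow_le (habs u hu)).symm
  have hmono := (strictMonoOn_tsum_mul_pow hnonneg one_ne_zero
    (by norm_num [fcCoeff_one]) hsum).congr heq
  have htop := (tendsto_tsum_mul_pow_atTop hnonneg (by norm_num) hsum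
    not_summable_succ_mul_fcCoeff_mul_pow).congr'
    (eventuallyEq_of_mem (Ioo_mem_nhdsLT (by norm_num)) (heq.mono Ioo_subset_Ico_self))
  have hcont : ContinuousOn (fun u => Fser u + u * deriv Fser u) (Ico 0 (1 / 27)) :=
    ContinuousOn.congr (fun u hu => (hasDerivAt_tsum_mul_pow abs_succ_mul_fcCoeff_mul_pow_le
      (habs u hu)).continuousAt.continuousWithinAt) heq.symm
  have hzero : Fser 0 + (0 : ℝ) * deriv Fser 0 = 0 := by simp [Fser_zero]
  exact ⟨hmono, hzero, htop, fun y hy =>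
    existsUnique_eq_of_strictMonoOn_of_tendsto_atTop (by norm_num) hcont hmono htop
      (by rwa [hzero])⟩
end

section
/- The fixed-point equation R = 1 + ∑_{n≥1} (3n)!/(n!·n!·(n+1)!) · g^n · y^{n-1} · R^{n+1} has a unique solution R in the ring ℚ[y][[g]] of formal power series in g with polynomial coefficients in y, and all coefficients of R are polynomials in y with nonnegative integer coefficients. -/
open Nat PowerSeries

/-- The Fuss–Catalan-type rational numbers `(3n)!/(n!·n!·(n+1)!)`. -/
noncomputable def fcQ (n : ℕ) : ℚ := ((3 * n)! : ℚ) / ((n ! : ℚ) * (n !) * ((n + 1)!))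

/-- `R ∈ ℚ[y][[g]]` satisfies `R = 1 + ∑_{n≥1} a_n · g^n · R^{n+1}`, coefficient-wise. -/
def SatisfiesFP (a : ℕ → Polynomial ℚ) (R : PowerSeries (Polynomial ℚ)) : Prop :=
  ∀ N : ℕ, coeff (R := Polynomial ℚ) N R =
    coeff (R := Polynomial ℚ) N
      (1 + ∑ n ∈ Finset.Icc 1 N, PowerSeries.C (R := Polynomial ℚ) (a n) * X ^ n * R ^ (n + 1))

/-!
Comparing coefficients of `g^N`, the right-hand side sees `R` only through its coefficients of
degree `< N`, since every term carries a factor `g^n` with `n ≥ 1`. Hence the coefficients of `R`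
are determined one after the other, which gives existence and uniqueness. The recursion only adds
and multiplies earlier coefficients and the numbers `(3n)!/(n!·n!·(n+1)!) = C(3n, n) · Cat(n)`, so
by induction every coefficient lies in the subsemiring `ℕ[y]` of `ℚ[y]`.
-/

theorem fcQ_eq_choose_mul_catalan (n : ℕ) : fcQ n = ((3 * n).choose n * catalan n : ℕ) := by
  have hcat : ((n + 1 : ℕ) : ℚ) * catalan n = (2 * n)! / (n ! * n !) := by
    rw [← Nat.cast_mul, succ_mul_catalan_eq_centralBinom, centralBinom_eq_two_mul_choose,
      Nat.cast_choose ℚ (by omega), show 2 * n - n = n by omega]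
  have hcat' : (catalan n : ℚ) = (2 * n)! / (n ! * (n + 1)!) := by
    rw [Nat.factorial_succ]
    push_cast at hcat ⊢
    field_simp at hcat ⊢
    linarith
  rw [fcQ, Nat.cast_mul, hcat', Nat.cast_choose ℚ (by omega), show 3 * n - n = 2 * n by omega]
  field_simp

namespace PowerSeries

section Semiring

variable {R : Type*} [Semiring R]

theorem coeff_mul_mem {S : Subsemiring R} {f g : R⟦X⟧} {m : ℕ}
    (hf : ∀ k ≤ m, coeff k f ∈ S) (hg : ∀ k ≤ m, coeff k g ∈ S) : coeff m (f * g) ∈ S := by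
  rw [coeff_mul]
  exact sum_mem fun p hp => mul_mem (hf _ (Finset.HasAntidiagonal.antidiagonal.fst_le hp))
    (hg _ (Finset.HasAntidiagonal.antidiagonal.snd_le hp))

theorem coeff_pow_mem {S : Subsemiring R} {f : R⟦X⟧} {m : ℕ} (hf : ∀ k ≤ m, coeff k f ∈ S)
    (a : ℕ) : ∀ k ≤ m, coeff k (f ^ a) ∈ S := by
  induction a with
  | zero =>
    intro k _
    rw [pow_zero, coeff_one]
    split_ifs
    exacts [one_mem S, zero_mem S]
  | succ a ih =>
    intro k hk
    rw [pow_succ]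
    exact coeff_mul_mem (fun l hl => ih l (hl.trans hk)) (fun l hl => hf l (hl.trans hk))

end Semiring

variable {R : Type*} [CommSemiring R]

theorem coeff_pow_eq_of_coeff_eq {f g : R⟦X⟧} {n : ℕ} (h : ∀ k < n, coeff k f = coeff k g)
    (a : ℕ) {d : ℕ} (hd : d < n) : coeff d (f ^ a) = coeff d (g ^ a) := by
  have htrunc : trunc n f = trunc n g := by
    ext k
    simp only [coeff_trunc]
    split_ifs with hk
    · exact h k hk
    · rfl
  rw [← coeff_coe_trunc_of_lt hd, ← trunc_trunc_pow, htrunc, trunc_trunc_pow,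
    coeff_coe_trunc_of_lt hd]

/-- Stopping the sum at `n = N` does not change the coefficient of `X^N`, the only one used. -/
noncomputable def fpRhs (a : ℕ → R) (N : ℕ) (F : R⟦X⟧) : R⟦X⟧ :=
  1 + ∑ n ∈ Finset.Icc 1 N, C (a n) * X ^ n * F ^ (n + 1)

theorem coeff_fpRhs (a : ℕ → R) (N : ℕ) (F : R⟦X⟧) :
    coeff N (fpRhs a N F) =
      coeff N (1 : R⟦X⟧) + ∑ n ∈ Finset.Icc 1 N, a n * coeff (N - n) (F ^ (n + 1)) := by
  rw [fpRhs, map_add, map_sum]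
  congr 1
  refine Finset.sum_congr rfl fun n hn => ?_
  rw [mul_assoc, coeff_C_mul, coeff_X_pow_mul', if_pos (Finset.mem_Icc.mp hn).2]

theorem coeff_fpRhs_congr (a : ℕ → R) {N : ℕ} {F G : R⟦X⟧}
    (h : ∀ k < N, coeff k F = coeff k G) : coeff N (fpRhs a N F) = coeff N (fpRhs a N G) := by
  simp only [coeff_fpRhs]
  congr 1
  refine Finset.sum_congr rfl fun n hn => ?_
  have hn := Finset.mem_Icc.mp hn
  rw [coeff_pow_eq_of_coeff_eq h (n + 1) (by omega : N - n < N)]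

theorem coeff_fpRhs_mem {S : Subsemiring R} {a : ℕ → R} (ha : ∀ n, a n ∈ S) {N : ℕ}
    {F : R⟦X⟧} (hF : ∀ k < N, coeff k F ∈ S) : coeff N (fpRhs a N F) ∈ S := by
  rw [coeff_fpRhs, coeff_one]
  refine add_mem ?_ (sum_mem fun n hn => mul_mem (ha n) ?_)
  · split_ifs
    exacts [one_mem S, zero_mem S]
  · have hn := Finset.mem_Icc.mp hn
    exact coeff_pow_mem (fun k hk => hF k (by omega)) (n + 1) (N - n) le_rfl

theorem eq_of_coeff_eq_coeff_fpRhs (a : ℕ → R) {F G : R⟦X⟧}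
    (hF : ∀ N, coeff N F = coeff N (fpRhs a N F)) (hG : ∀ N, coeff N G = coeff N (fpRhs a N G)) :
    F = G := by
  ext N
  induction N using Nat.strong_induction_on with
  | _ N ih => rw [hF, hG]; exact coeff_fpRhs_congr a ih

theorem coeff_mem_of_coeff_eq_coeff_fpRhs {S : Subsemiring R} {a : ℕ → R} (ha : ∀ n, a n ∈ S)
    {F : R⟦X⟧} (hF : ∀ N, coeff N F = coeff N (fpRhs a N F)) (N : ℕ) : coeff N F ∈ S := by
  induction N using Nat.strong_induction_on with
  | _ N ih => rw [hF]; exact coeff_fpRhs_mem ha ih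

noncomputable def fpSolutionCoeff (a : ℕ → R) (N : ℕ) : R :=
  coeff N (fpRhs a N (mk fun k => if k < N then fpSolutionCoeff a k else 0))
termination_by N
decreasing_by assumption

noncomputable def fpSolution (a : ℕ → R) : R⟦X⟧ := mk (fpSolutionCoeff a)

theorem coeff_fpSolution (a : ℕ → R) (N : ℕ) :
    coeff N (fpSolution a) = coeff N (fpRhs a N (fpSolution a)) := by
  rw [fpSolution, coeff_mk, fpSolutionCoeff]
  exact coeff_fpRhs_congr a fun k hk => by simp [hk]

end PowerSeries

/-- The fixed-point equation `R = 1 + ∑_{n≥1} (3n)!/(n!n!(n+1)!) g^n y^{n-1} R^{n+1}`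
has a unique solution `R ∈ ℚ[y][[g]]`, and every coefficient of every coefficient
polynomial of `R` is a nonnegative integer. -/
theorem stmt_7 :
    (∃! R : PowerSeries (Polynomial ℚ),
      SatisfiesFP (fun n => Polynomial.C (fcQ n) * Polynomial.X ^ (n - 1)) R) ∧
    ∀ R : PowerSeries (Polynomial ℚ),
      SatisfiesFP (fun n => Polynomial.C (fcQ n) * Polynomial.X ^ (n - 1)) R →
      ∀ N i : ℕ, ∃ m : ℕ, (coeff (R := Polynomial ℚ) N R).coeff i = (m : ℚ) := by
  set a : ℕ → Polynomial ℚ := fun n => Polynomial.C (fcQ n) * Polynomial.X ^ (n - 1)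
  have ha : ∀ n, a n ∈ (Polynomial.mapRingHom (Nat.castRingHom ℚ)).rangeS := fun n =>
    ⟨Polynomial.C ((3 * n).choose n * catalan n) * Polynomial.X ^ (n - 1), by
      simp [a, fcQ_eq_choose_mul_catalan]⟩
  refine ⟨⟨fpSolution a, coeff_fpSolution a, fun R hR => eq_of_coeff_eq_coeff_fpRhs a hR
    (coeff_fpSolution a)⟩, fun R hR N i => ?_⟩
  obtain ⟨q, hq⟩ := coeff_mem_of_coeff_eq_coeff_fpRhs ha hR N
  exact ⟨q.coeff i, by rw [← hq]; simp⟩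
end
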